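/- Let (X,d) be a compact Ahlfors regular metric space and let C ⊆ X be a nonempty compact set. Then for all t with lb-dim C < t < ub-dim C, the covering regularity exponent satisfies p_t(C) ≤ ((lb-dim C)/t) · (ub-dim X − t)/(ub-dim X − lb-dim C). -/

import Mathlib

open Set Filter Topology Metric MeasureTheory

/-- Minimum number of sets of diameter at most `δ` needed to cover `F`. -/
noncomputable def coverN {X : Type*} [MetricSpace X] (F : Set X) (δ : ℝ) : ℕ :=
  sInf {n : ℕ | ∃ U : Fin n → Set X, (∀ i, EMetric.diam (U i) ≤ ENNReal.ofReal δ) ∧ F ⊆ ⋃ i, U i}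

/-- Lower box dimension. -/
noncomputable def lbDim {X : Type*} [MetricSpace X] (F : Set X) : ℝ :=
  Filter.liminf (fun δ : ℝ => Real.log (coverN F δ) / (-Real.log δ)) (𝓝[>] 0)

/-- Upper box dimension. -/
noncomputable def ubDim {X : Type*} [MetricSpace X] (F : Set X) : ℝ :=
  Filter.limsup (fun δ : ℝ => Real.log (coverN F δ) / (-Real.log δ)) (𝓝[>] 0)

/-- The `(t,δ)`-covering regularity exponent `p_{t,δ}(C)`. -/
noncomputable def cre {X : Type*} [MetricSpace X] (C : Set X) (t δ : ℝ) : ℝ :=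
  sSup {p : ℝ | 0 ≤ p ∧ p ≤ 1 ∧ δ ^ (-(p * t)) ≤ (coverN C (δ ^ p) : ℝ)}

/-- The `t`-covering regularity exponent `p_t(C)`. -/
noncomputable def creT {X : Type*} [MetricSpace X] (C : Set X) (t : ℝ) : ℝ :=
  Filter.liminf (fun δ : ℝ => cre C t δ) (𝓝[>] 0)

/-!
Ahlfors regularity controls covering numbers across scales: by a packing argument with disjoint
balls, a set of diameter `δ₀` is covered by `≲ (δ₀ / σ) ^ d` sets of diameter `σ ≤ δ₀`, so
`N_σ(C) ≲ N_{δ₀}(C) (δ₀ / σ) ^ d`; the same counting shows `ubDim X = d`.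
Take `s > lbDim C`, so that `N_{δ₀}(C) ≤ δ₀ ^ (-s)` at arbitrarily small scales `δ₀ = δ ^ q`.
For `p ≤ q`, monotonicity gives `δ ^ (-p t) ≤ N_{δ^p}(C) ≤ δ ^ (-q s)`, i.e. `p ≤ q s / t`; for
`q < p ≤ 1` the interpolation bound gives `N_{δ^p}(C) ≲ δ ^ (-q s - (p - q) d)`, which is smaller
than `δ ^ (-p t)` as soon as `q (d - s) > d - t`. Hence `p_{t,δ}(C) ≤ q s / t` along a sequence
`δ → 0`, and letting `s → lbDim C` and `q → (d - t) / (d - s)` gives the bound.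
-/

open scoped ENNReal NNReal

section CoveringNumber

variable {X : Type*} [MetricSpace X]

lemma coverN_le_card {ι : Type*} [Fintype ι] {F : Set X} {δ : ℝ} (U : ι → Set X)
    (hU : ∀ i, ediam (U i) ≤ ENNReal.ofReal δ) (hF : F ⊆ ⋃ i, U i) :
    coverN F δ ≤ Fintype.card ι := by
  refine Nat.sInf_le ⟨U ∘ (Fintype.equivFin ι).symm, fun i => hU _, hF.trans ?_⟩
  exact iUnion_subset fun i => subset_iUnion_of_subset (Fintype.equivFin ι i) (by simp)

lemma ediam_closedBall_le (x : X) (r : ℝ) : ediam (closedBall x r) ≤ ENNReal.ofReal (2 * r) :=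
  ediam_le_of_forall_dist_le fun y hy z hz => by
    linarith [dist_triangle_right y z x, mem_closedBall.1 hy, mem_closedBall.1 hz]

lemma exists_fin_cover_of_isCover {F N : Set X} {ε : ℝ≥0} (hN : IsCover ε F N)
    (hfin : N.Finite) :
    ∃ U : Fin N.ncard → Set X, (∀ i, ediam (U i) ≤ ENNReal.ofReal (2 * ε)) ∧ F ⊆ ⋃ i, U i := by
  have := hfin.to_subtype
  rw [← Nat.card_coe_set_eq]
  refine ⟨fun i => closedBall ((Finite.equivFin N).symm i : X) ε,
    fun i => ediam_closedBall_le _ _, fun x hx => ?_⟩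
  obtain ⟨y, hy, hxy⟩ := mem_iUnion₂.1 (isCover_iff_subset_iUnion_closedBall.1 hN hx)
  exact mem_iUnion.2 ⟨Finite.equivFin N ⟨y, hy⟩, by rwa [Equiv.symm_apply_apply]⟩

lemma exists_cover_card_eq_coverN {F : Set X} (hF : TotallyBounded F) {δ : ℝ} (hδ : 0 < δ) :
    ∃ U : Fin (coverN F δ) → Set X, (∀ i, ediam (U i) ≤ ENNReal.ofReal δ) ∧ F ⊆ ⋃ i, U i := by
  obtain ⟨N, -, hfin, hN⟩ := exists_finite_isCover_of_totallyBounded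
    (ε := (δ / 2).toNNReal) (by simpa using hδ) hF
  have hcover := exists_fin_cover_of_isCover hN hfin
  rw [Real.coe_toNNReal _ (half_pos hδ).le, mul_div_cancel₀ _ two_ne_zero] at hcover
  exact Nat.sInf_mem (s := {n | ∃ U : Fin n → Set X, (∀ i, ediam (U i) ≤ ENNReal.ofReal δ) ∧
    F ⊆ ⋃ i, U i}) ⟨_, hcover⟩

lemma coverN_anti {F : Set X} (hF : TotallyBounded F) {δ δ' : ℝ} (hδ : 0 < δ) (hδδ' : δ ≤ δ') :
    coverN F δ' ≤ coverN F δ := by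
  obtain ⟨U, hU, hFU⟩ := exists_cover_card_eq_coverN hF hδ
  simpa using coverN_le_card U (fun i => (hU i).trans (ENNReal.ofReal_le_ofReal hδδ')) hFU

lemma one_le_coverN {F : Set X} (hF : TotallyBounded F) (hne : F.Nonempty) {δ : ℝ} (hδ : 0 < δ) :
    1 ≤ coverN F δ := by
  obtain ⟨U, -, hFU⟩ := exists_cover_card_eq_coverN hF hδ
  obtain ⟨i, -⟩ := mem_iUnion.1 (hFU hne.some_mem)
  exact Nat.one_le_iff_ne_zero.2 (Fin.pos i).ne'

lemma coverN_le_one_of_subsingleton {F : Set X} (hF : F.Subsingleton) (δ : ℝ) :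
    coverN F δ ≤ 1 := by
  simpa using coverN_le_card (fun _ : Unit => F) (fun _ => by simp [ediam_subsingleton hF])
    (subset_iUnion (fun _ : Unit => F) ())

lemma coverN_le_coverN_mul {C : Set X} (hC : TotallyBounded C) {σ δ₀ M : ℝ} (hσ : 0 < σ)
    (hδ₀ : 0 < δ₀) (hM : ∀ E ⊆ C, ediam E ≤ ENNReal.ofReal δ₀ → (coverN E σ : ℝ) ≤ M) :
    (coverN C σ : ℝ) ≤ coverN C δ₀ * M := by
  obtain ⟨U, hU, hCU⟩ := exists_cover_card_eq_coverN hC hδ₀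
  have hpiece (i : Fin (coverN C δ₀)) := exists_cover_card_eq_coverN
    (hC.subset (inter_subset_right : U i ∩ C ⊆ C)) hσ
  choose V hV hUV using hpiece
  have hcover : C ⊆ ⋃ j : Σ i, Fin (coverN (U i ∩ C) σ), V j.1 j.2 := fun x hx => by
    obtain ⟨i, hi⟩ := mem_iUnion.1 (hCU hx)
    obtain ⟨k, hk⟩ := mem_iUnion.1 (hUV i ⟨hi, hx⟩)
    exact mem_iUnion.2 ⟨⟨i, k⟩, hk⟩
  calc (coverN C σ : ℝ) ≤ ∑ i, (coverN (U i ∩ C) σ : ℝ) := by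
        exact_mod_cast (coverN_le_card (fun j : Σ i, Fin (coverN (U i ∩ C) σ) => V j.1 j.2)
          (fun j => hV j.1 j.2) hcover).trans_eq (by simp)
    _ ≤ ∑ _i : Fin (coverN C δ₀), M := Finset.sum_le_sum fun i _ =>
        hM _ inter_subset_right ((ediam_mono inter_subset_left).trans (hU i))
    _ = coverN C δ₀ * M := by simp

lemma exists_maximal_isSeparated (ε : ℝ≥0∞) (E : Set X) :
    ∃ N, Maximal (fun N => N ⊆ E ∧ IsSeparated ε N) N := by
  refine zorn_subset _ fun c hc hchain => ⟨⋃₀ c, ⟨sUnion_subset fun s hs => (hc hs).1, ?_⟩,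
    fun s hs => subset_sUnion_of_mem hs⟩
  exact (pairwise_sUnion hchain.directedOn).2 fun s hs => (hc hs).2

end CoveringNumber

section Packing

variable {X : Type*} [MetricSpace X] [MeasurableSpace X] [OpensMeasurableSpace X]
  {μ : Measure X}

lemma Metric.IsSeparated.encard_mul_le_measure [TopologicalSpace.SeparableSpace X] {S : Set X}
    {ε : ℝ} (hε : 0 < ε) (hS : IsSeparated (ENNReal.ofReal ε) S) {a : ℝ≥0∞}
    (ha : ∀ x ∈ S, a ≤ μ (ball x (ε / 2))) :
    S.encard * a ≤ μ (⋃ x ∈ S, ball x (ε / 2)) := by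
  have hdisj : S.PairwiseDisjoint fun x => ball x (ε / 2) := fun x hx y hy hxy =>
    ball_disjoint_ball (by
      have : ENNReal.ofReal ε < edist x y := hS hx hy hxy
      rw [edist_dist, ENNReal.ofReal_lt_ofReal_iff_of_nonneg hε.le] at this
      linarith)
  have hcount : S.Countable := hdisj.countable_of_isOpen (fun _ _ => isOpen_ball)
    fun x _ => nonempty_ball.2 (half_pos hε)
  rw [measure_biUnion hcount hdisj fun _ _ => measurableSet_ball, Set.encard, ← ENNReal.tsum_const]
  exact ENNReal.tsum_le_tsum fun x => ha x x.2

lemma coverN_mul_le_of_measure [TopologicalSpace.SeparableSpace X] {E : Set X} {σ a b : ℝ}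
    (hσ : 0 < σ) (ha : 0 < a) (hb : 0 ≤ b)
    (hlow : ∀ x ∈ E, ENNReal.ofReal a ≤ μ (ball x (σ / 4)))
    (hup : μ (⋃ x ∈ E, ball x (σ / 4)) ≤ ENNReal.ofReal b) :
    coverN E σ * a ≤ b := by
  obtain ⟨N, hN⟩ := exists_maximal_isSeparated (ENNReal.ofReal (σ / 2)) E
  have hσ4 : σ / 2 / 2 = σ / 4 := by ring
  have hpack : N.encard * ENNReal.ofReal a ≤ ENNReal.ofReal b := by
    refine (hN.prop.2.encard_mul_le_measure (μ := μ) (half_pos hσ) fun x hx => ?_).trans ?_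
    · rw [hσ4]; exact hlow x (hN.prop.1 hx)
    · rw [hσ4]; exact (measure_mono (biUnion_subset_biUnion_left hN.prop.1)).trans hup
  have hfin : N.Finite := encard_ne_top_iff.1 fun h => by
    simp [h, ENNReal.top_mul (ENNReal.ofReal_pos.2 ha).ne'] at hpack
  have hcover : coverN E σ ≤ N.ncard := by
    have := exists_fin_cover_of_isCover (ε := (σ / 2).toNNReal)
      (IsCover.of_maximal_isSeparated hN) hfin
    rw [Real.coe_toNNReal _ (half_pos hσ).le, mul_div_cancel₀ _ two_ne_zero] at this
    exact Nat.sInf_le this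
  have hpack' : (N.ncard * a : ℝ) ≤ b := by
    rwa [← hfin.cast_ncard_eq, ENat.toENNReal_coe, ← ENNReal.ofReal_natCast,
      ← ENNReal.ofReal_mul (Nat.cast_nonneg _), ENNReal.ofReal_le_ofReal_iff hb] at hpack
  exact (mul_le_mul_of_nonneg_right (by exact_mod_cast hcover) ha.le).trans hpack'

end Packing

section BoxDimension

variable {X : Type*} [MetricSpace X]

noncomputable def coverExponent (F : Set X) (δ : ℝ) : ℝ :=
  Real.log (coverN F δ) / -Real.log δ

lemma lbDim_eq_liminf (F : Set X) : lbDim F = liminf (coverExponent F) (𝓝[>] 0) := rfl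

lemma ubDim_eq_limsup (F : Set X) : ubDim F = limsup (coverExponent F) (𝓝[>] 0) := rfl

lemma eventually_mem_Ioo_zero_one : ∀ᶠ δ in 𝓝[>] (0 : ℝ), δ ∈ Ioo 0 1 :=
  Ioo_mem_nhdsGT one_pos

lemma eventually_coverExponent_nonneg (F : Set X) : ∀ᶠ δ in 𝓝[>] 0, 0 ≤ coverExponent F δ :=
  eventually_mem_Ioo_zero_one.mono fun _ hδ =>
    div_nonneg (Real.log_natCast_nonneg _) (neg_nonneg.2 (Real.log_neg hδ.1 hδ.2).le)

lemma coverExponent_le_iff {F : Set X} {δ e : ℝ} (hδ : δ ∈ Ioo 0 1) (hN : 0 < coverN F δ) :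
    coverExponent F δ ≤ e ↔ (coverN F δ : ℝ) ≤ δ ^ (-e) := by
  rw [coverExponent, div_le_iff₀ (neg_pos.2 (Real.log_neg hδ.1 hδ.2)),
    ← Real.log_le_log_iff (by exact_mod_cast hN) (Real.rpow_pos_of_pos hδ.1 _),
    Real.log_rpow hδ.1, neg_mul, mul_neg]

lemma le_coverExponent_iff {F : Set X} {δ e : ℝ} (hδ : δ ∈ Ioo 0 1) (hN : 0 < coverN F δ) :
    e ≤ coverExponent F δ ↔ δ ^ (-e) ≤ (coverN F δ : ℝ) := by
  rw [coverExponent, le_div_iff₀ (neg_pos.2 (Real.log_neg hδ.1 hδ.2)),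
    ← Real.log_le_log_iff (Real.rpow_pos_of_pos hδ.1 _) (by exact_mod_cast hN),
    Real.log_rpow hδ.1, neg_mul, mul_neg]

lemma rpow_neg_add_log_div {δ K : ℝ} (hδ : δ ∈ Ioo 0 1) (hK : 0 < K) (d : ℝ) :
    δ ^ (-(d + Real.log K / -Real.log δ)) = K * δ ^ (-d) := by
  have hlog : Real.log δ ≠ 0 := (Real.log_neg hδ.1 hδ.2).ne
  rw [neg_add, Real.rpow_add hδ.1, mul_comm, Real.rpow_def_of_pos hδ.1 (-(_ / _)),
    show Real.log δ * -(Real.log K / -Real.log δ) = Real.log K by field_simp, Real.exp_log hK]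

lemma tendsto_div_neg_log (a : ℝ) :
    Tendsto (fun δ => a / -Real.log δ) (𝓝[>] 0) (𝓝 0) :=
  tendsto_const_nhds.div_atTop (tendsto_neg_atBot_atTop.comp Real.tendsto_log_nhdsGT_zero)

lemma eventually_coverExponent_le {F : Set X} (hF : TotallyBounded F) (hne : F.Nonempty)
    {K d : ℝ} (hK : 0 < K) (hN : ∀ᶠ δ in 𝓝[>] 0, (coverN F δ : ℝ) ≤ K * δ ^ (-d)) :
    ∀ᶠ δ in 𝓝[>] 0, coverExponent F δ ≤ d + Real.log K / -Real.log δ := by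
  filter_upwards [hN, eventually_mem_Ioo_zero_one] with δ hNδ hδ
  rwa [coverExponent_le_iff hδ (one_le_coverN hF hne hδ.1), rpow_neg_add_log_div hδ hK]

lemma isBoundedUnder_coverExponent {F : Set X} (hF : TotallyBounded F) (hne : F.Nonempty)
    {K d : ℝ} (hK : 0 < K) (hN : ∀ᶠ δ in 𝓝[>] 0, (coverN F δ : ℝ) ≤ K * δ ^ (-d)) :
    IsBoundedUnder (· ≤ ·) (𝓝[>] 0) (coverExponent F) :=
  ((tendsto_div_neg_log _).const_add d).isBoundedUnder_le.mono_le
    (eventually_coverExponent_le hF hne hK hN)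

lemma ubDim_le_of_coverN_le {F : Set X} (hF : TotallyBounded F) (hne : F.Nonempty)
    {K d : ℝ} (hK : 0 < K) (hN : ∀ᶠ δ in 𝓝[>] 0, (coverN F δ : ℝ) ≤ K * δ ^ (-d)) :
    ubDim F ≤ d := by
  have hlim := (tendsto_div_neg_log (Real.log K)).const_add d
  rw [add_zero] at hlim
  rw [ubDim_eq_limsup, ← hlim.limsup_eq]
  exact limsup_le_limsup (eventually_coverExponent_le hF hne hK hN)
    (isBoundedUnder_of_eventually_ge (eventually_coverExponent_nonneg F)).isCoboundedUnder_le
    hlim.isBoundedUnder_le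

lemma le_ubDim_of_le_coverN {F : Set X} {k d : ℝ} (hk : 0 < k)
    (hN : ∀ᶠ δ in 𝓝[>] 0, k * δ ^ (-d) ≤ (coverN F δ : ℝ))
    (hbdd : IsBoundedUnder (· ≤ ·) (𝓝[>] 0) (coverExponent F)) :
    d ≤ ubDim F := by
  have hlim := (tendsto_div_neg_log (Real.log k)).const_add d
  rw [add_zero] at hlim
  rw [ubDim_eq_limsup, ← hlim.limsup_eq]
  refine limsup_le_limsup ?_ hlim.isBoundedUnder_ge.isCoboundedUnder_le hbdd
  filter_upwards [hN, eventually_mem_Ioo_zero_one] with δ hNδ hδ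
  have hpos : 0 < coverN F δ := by
    exact_mod_cast (mul_pos hk (Real.rpow_pos_of_pos hδ.1 _)).trans_le hNδ
  rwa [le_coverExponent_iff hδ hpos, rpow_neg_add_log_div hδ hk]

lemma lbDim_nonneg {F : Set X} (hbdd : IsBoundedUnder (· ≤ ·) (𝓝[>] 0) (coverExponent F)) :
    0 ≤ lbDim F :=
  le_liminf_of_le hbdd.isCoboundedUnder_ge (eventually_coverExponent_nonneg F)

lemma frequently_coverN_le_rpow {F : Set X} {s : ℝ} (hs : lbDim F < s)
    (hbdd : IsBoundedUnder (· ≤ ·) (𝓝[>] 0) (coverExponent F)) :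
    ∃ᶠ δ in 𝓝[>] 0, δ ∈ Ioo 0 1 ∧ (coverN F δ : ℝ) ≤ δ ^ (-s) := by
  refine ((frequently_lt_of_liminf_lt hbdd.isCoboundedUnder_ge hs).and_eventually
    eventually_mem_Ioo_zero_one).mono fun δ ⟨hlt, hδ⟩ => ⟨hδ, ?_⟩
  rcases Nat.eq_zero_or_pos (coverN F δ) with h0 | hpos
  · rw [h0, Nat.cast_zero]
    exact (Real.rpow_pos_of_pos hδ.1 _).le
  · exact (coverExponent_le_iff hδ hpos).1 hlt.le

lemma lbDim_eq_ubDim_of_subsingleton {F : Set X} (hF : F.Subsingleton) : lbDim F = ubDim F := by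
  have hzero : coverExponent F = 0 := funext fun δ => by
    rcases Nat.le_one_iff_eq_zero_or_eq_one.1 (coverN_le_one_of_subsingleton hF δ) with h | h <;>
      simp [coverExponent, h]
  rw [lbDim_eq_liminf, ubDim_eq_limsup, hzero, Pi.zero_def, liminf_const, limsup_const]

end BoxDimension

section CoveringRegularity

variable {X : Type*} [MetricSpace X]

lemma cre_nonneg (C : Set X) (t δ : ℝ) : 0 ≤ cre C t δ :=
  Real.sSup_nonneg fun _ hp => hp.1

lemma tendsto_rpow_const_nhdsGT_zero {q : ℝ} (hq : 0 < q) :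
    Tendsto (· ^ q) (𝓝[>] (0 : ℝ)) (𝓝[>] 0) := by
  refine tendsto_nhdsWithin_iff.2 ⟨?_, eventually_mem_nhdsWithin.mono fun x hx =>
    Real.rpow_pos_of_pos hx q⟩
  simpa [Real.zero_rpow hq.ne'] using
    ((Real.continuousAt_rpow_const 0 q (Or.inr hq.le)).tendsto).mono_left nhdsWithin_le_nhds

lemma cre_le_of_interpolation {C : Set X} (hC : TotallyBounded C) {t d s q K δ : ℝ}
    (ht : 0 < t) (htd : t ≤ d) (hs : 0 ≤ s) (hq : 0 < q) (hδ : δ ∈ Ioo 0 1)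
    (hinterp : ∀ σ, 0 < σ → σ ≤ δ ^ q →
      (coverN C σ : ℝ) ≤ coverN C (δ ^ q) * (K * (δ ^ q / σ) ^ d))
    (hN : (coverN C (δ ^ q) : ℝ) ≤ δ ^ (-(q * s))) (hK : K < δ ^ (d - t - q * (d - s))) :
    cre C t δ ≤ q * s / t := by
  obtain ⟨hδ0, hδ1⟩ := hδ
  refine Real.sSup_le (fun p ⟨hp0, hp1, hpN⟩ => ?_) (by positivity)
  rcases le_or_gt p q with hpq | hqp
  · have hanti : (coverN C (δ ^ p) : ℝ) ≤ coverN C (δ ^ q) := by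
      exact_mod_cast coverN_anti hC (Real.rpow_pos_of_pos hδ0 q)
        (Real.rpow_le_rpow_of_exponent_ge hδ0 hδ1.le hpq)
    have := hpN.trans (hanti.trans hN)
    rw [Real.rpow_le_rpow_left_iff_of_base_lt_one hδ0 hδ1] at this
    rw [le_div_iff₀ ht]
    linarith
  · exfalso
    have hratio : (δ ^ q / δ ^ p) ^ d = δ ^ ((q - p) * d) := by
      rw [← Real.rpow_sub hδ0, ← Real.rpow_mul hδ0.le]
    have hexp : δ ^ (-(q * s)) * (δ ^ (d - t - q * (d - s)) * δ ^ ((q - p) * d)) =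
        δ ^ (d - t - p * d) := by
      rw [← Real.rpow_add hδ0, ← Real.rpow_add hδ0]
      ring_nf
    have hfine := hinterp _ (Real.rpow_pos_of_pos hδ0 p)
      (Real.rpow_le_rpow_of_exponent_ge hδ0 hδ1.le hqp.le)
    rw [hratio] at hfine
    have hpos := Real.rpow_pos_of_pos hδ0
    have hK0 : 0 < K * δ ^ ((q - p) * d) :=
      pos_of_mul_pos_right ((hpos _).trans_le (hpN.trans hfine)) (Nat.cast_nonneg _)
    have : δ ^ (-(p * t)) < δ ^ (-(p * t)) := calc
      δ ^ (-(p * t)) ≤ coverN C (δ ^ q) * (K * δ ^ ((q - p) * d)) := hpN.trans hfine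
      _ ≤ δ ^ (-(q * s)) * (K * δ ^ ((q - p) * d)) := mul_le_mul_of_nonneg_right hN hK0.le
      _ < δ ^ (-(q * s)) * (δ ^ (d - t - q * (d - s)) * δ ^ ((q - p) * d)) := by
        gcongr
      _ = δ ^ (d - t - p * d) := hexp
      _ ≤ δ ^ (-(p * t)) :=
        Real.rpow_le_rpow_of_exponent_ge hδ0 hδ1.le (by nlinarith)
    exact lt_irrefl _ this

lemma creT_le_mul_div_of_interpolation {C : Set X} (hC : TotallyBounded C) {t d s q K : ℝ}
    (ht : 0 < t) (htd : t ≤ d) (hs : 0 ≤ s) (hq : 0 < q) (hqs : d - t < q * (d - s))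
    (hlb : lbDim C < s) (hbdd : IsBoundedUnder (· ≤ ·) (𝓝[>] 0) (coverExponent C))
    (hinterp : ∀ᶠ δ₀ in 𝓝[>] 0, ∀ σ, 0 < σ → σ ≤ δ₀ →
      (coverN C σ : ℝ) ≤ coverN C δ₀ * (K * (δ₀ / σ) ^ d)) :
    creT C t ≤ q * s / t := by
  have hfreq : ∃ᶠ δ in 𝓝[>] 0, (coverN C (δ ^ q) : ℝ) ≤ δ ^ (-(q * s)) :=
    (tendsto_rpow_const_nhdsGT_zero (inv_pos.2 hq)).frequently
      ((frequently_coverN_le_rpow hlb hbdd).mono fun δ₀ ⟨hδ₀, hN⟩ => by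
        rwa [Real.rpow_inv_rpow hδ₀.1.le hq.ne', ← Real.rpow_mul hδ₀.1.le,
          show q⁻¹ * -(q * s) = -s by field_simp])
  have hsmall : ∀ᶠ δ in 𝓝[>] 0, δ ∈ Ioo 0 1 ∧ K < δ ^ (d - t - q * (d - s)) ∧
      ∀ σ, 0 < σ → σ ≤ δ ^ q → (coverN C σ : ℝ) ≤ coverN C (δ ^ q) * (K * (δ ^ q / σ) ^ d) :=
    eventually_mem_Ioo_zero_one.and
      (((tendsto_rpow_neg_nhdsGT_zero (by linarith)).eventually_gt_atTop K).and
        ((tendsto_rpow_const_nhdsGT_zero hq).eventually hinterp))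
  exact liminf_le_of_frequently_le ((hfreq.and_eventually hsmall).mono
      fun δ ⟨hN, hδ, hK, hI⟩ => cre_le_of_interpolation hC ht htd hs hq hδ hI hN hK)
    (isBoundedUnder_of_eventually_ge (Eventually.of_forall (cre_nonneg C t)))

lemma creT_le_lbDim_div_mul_of_interpolation {C : Set X} (hC : TotallyBounded C) {t d K : ℝ}
    (hbdd : IsBoundedUnder (· ≤ ·) (𝓝[>] 0) (coverExponent C)) (hlbt : lbDim C < t)
    (htd : t ≤ d) (hinterp : ∀ᶠ δ₀ in 𝓝[>] 0, ∀ σ, 0 < σ → σ ≤ δ₀ →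
      (coverN C σ : ℝ) ≤ coverN C δ₀ * (K * (δ₀ / σ) ^ d)) :
    creT C t ≤ lbDim C / t * ((d - t) / (d - lbDim C)) := by
  have hlb := lbDim_nonneg hbdd
  set lb := lbDim C
  let bound (ε : ℝ) := ((d - t) / (d - (lb + ε)) + ε) * (lb + ε) / t
  have hlim : Tendsto bound (𝓝[>] 0) (𝓝 (bound 0)) :=
    (ContinuousAt.tendsto (by fun_prop (disch := simp; linarith))).mono_left nhdsWithin_le_nhds
  have hbound : ∀ᶠ ε in 𝓝[>] 0, creT C t ≤ bound ε := by
    filter_upwards [Ioo_mem_nhdsGT (sub_pos.2 (hlbt.trans_le htd))] with ε ⟨hε0, hε⟩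
    have hgap : 0 < d - (lb + ε) := by linarith
    refine creT_le_mul_div_of_interpolation hC (hlb.trans_lt hlbt) htd (by linarith)
      (by positivity) ?_ (by linarith) hbdd hinterp
    rw [add_mul, div_mul_cancel₀ _ hgap.ne']
    nlinarith
  refine (ge_of_tendsto hlim hbound).trans_eq ?_
  simp only [bound, add_zero]
  ring

end CoveringRegularity

section AhlforsRegular

variable {X : Type*} [MetricSpace X]

lemma totallyBounded_of_compactSpace [CompactSpace X] (F : Set X) : TotallyBounded F :=
  isCompact_univ.totallyBounded.subset (subset_univ F)

lemma dist_le_of_ediam_le {E : Set X} {x y : X} {r : ℝ} (hx : x ∈ E) (hy : y ∈ E) (hr : 0 ≤ r)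
    (hE : ediam E ≤ ENNReal.ofReal r) : dist x y ≤ r :=
  (edist_le_ofReal hr).1 ((edist_le_ediam_of_mem hx hy).trans hE)

lemma measure_le_coverN_mul [MeasurableSpace X] (μ : Measure X) {F : Set X}
    (hF : TotallyBounded F) {σ : ℝ} (hσ : 0 < σ) {b : ℝ≥0∞}
    (hb : ∀ E, ediam E ≤ ENNReal.ofReal σ → μ E ≤ b) :
    μ F ≤ coverN F σ * b := by
  obtain ⟨U, hU, hFU⟩ := exists_cover_card_eq_coverN hF hσ
  calc μ F ≤ ∑ i, μ (U i) := (measure_mono hFU).trans (measure_iUnion_fintype_le μ U)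
    _ ≤ ∑ _i : Fin (coverN F σ), b := Finset.sum_le_sum fun i _ => hb _ (hU i)
    _ = coverN F σ * b := by simp

variable [MeasurableSpace X]

def IsAhlforsRegular (μ : Measure X) (d c : ℝ) : Prop :=
  ∀ (x : X) (ρ : ℝ), 0 < ρ → ρ ≤ diam (univ : Set X) →
    ENNReal.ofReal (c⁻¹ * ρ ^ d) ≤ μ (ball x ρ) ∧ μ (ball x ρ) ≤ ENNReal.ofReal (c * ρ ^ d)

namespace IsAhlforsRegular

variable {μ : Measure X} {d c : ℝ}

lemma measure_le_of_ediam_le (hμ : IsAhlforsRegular μ d c) {E : Set X} {σ : ℝ} (hσ : 0 < σ)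
    (hσD : 2 * σ ≤ diam (univ : Set X)) (hE : ediam E ≤ ENNReal.ofReal σ) :
    μ E ≤ ENNReal.ofReal (c * (2 * σ) ^ d) := by
  rcases E.eq_empty_or_nonempty with rfl | ⟨x, hx⟩
  · simp
  refine (measure_mono fun y hy => mem_ball.2 ?_).trans (hμ x _ (by linarith) hσD).2
  linarith [dist_le_of_ediam_le hy hx hσ.le hE]

lemma coverN_le_of_ediam_le [OpensMeasurableSpace X] [TopologicalSpace.SeparableSpace X]
    (hμ : IsAhlforsRegular μ d c) (hc : 0 < c) {E : Set X} {σ δ₀ : ℝ} (hσ : 0 < σ)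
    (hσδ₀ : σ ≤ δ₀) (hδ₀D : 2 * δ₀ ≤ diam (univ : Set X)) (hE : ediam E ≤ ENNReal.ofReal δ₀) :
    (coverN E σ : ℝ) ≤ c ^ 2 * 8 ^ d * (δ₀ / σ) ^ d := by
  have hδ₀ : 0 < δ₀ := hσ.trans_le hσδ₀
  have hup : μ (⋃ x ∈ E, ball x (σ / 4)) ≤ ENNReal.ofReal (c * (2 * δ₀) ^ d) := by
    rcases E.eq_empty_or_nonempty with rfl | ⟨x₀, hx₀⟩
    · simp
    refine (measure_mono (iUnion₂_subset fun x hx => ball_subset_ball' ?_)).trans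
      (hμ x₀ _ (by linarith) hδ₀D).2
    linarith [dist_le_of_ediam_le hx hx₀ hδ₀.le hE]
  have hpack := coverN_mul_le_of_measure (μ := μ) hσ (by positivity) (by positivity)
    (fun x _ => (hμ x _ (by positivity) (by linarith)).1) hup
  have hscale : (2 * δ₀) ^ d = 8 ^ d * (δ₀ / σ) ^ d * (σ / 4) ^ d := by
    rw [← Real.mul_rpow (by norm_num) (by positivity), ← Real.mul_rpow (by positivity)
      (by positivity)]
    congr 1
    field_simp
    ring
  rw [hscale, ← le_div_iff₀ (by positivity)] at hpack
  exact hpack.trans_eq (by field_simp)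

lemma coverN_le_coverN_mul [CompactSpace X] [OpensMeasurableSpace X]
    (hμ : IsAhlforsRegular μ d c) (hc : 0 < c) (C : Set X) {σ δ₀ : ℝ} (hσ : 0 < σ)
    (hσδ₀ : σ ≤ δ₀) (hδ₀D : 2 * δ₀ ≤ diam (univ : Set X)) :
    (coverN C σ : ℝ) ≤ coverN C δ₀ * (c ^ 2 * 8 ^ d * (δ₀ / σ) ^ d) :=
  _root_.coverN_le_coverN_mul (totallyBounded_of_compactSpace C) hσ (hσ.trans_le hσδ₀)
    fun _ _ hE => hμ.coverN_le_of_ediam_le hc hσ hσδ₀ hδ₀D hE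

lemma exists_coverN_le_rpow [CompactSpace X] [OpensMeasurableSpace X]
    (hμ : IsAhlforsRegular μ d c) (hc : 0 < c) (hD : 0 < diam (univ : Set X)) {F : Set X}
    (hF : F.Nonempty) : ∃ K, 0 < K ∧ ∀ᶠ σ in 𝓝[>] 0, (coverN F σ : ℝ) ≤ K * σ ^ (-d) := by
  set δ₀ := diam (univ : Set X) / 2
  have hN : (1 : ℝ) ≤ coverN F δ₀ := by
    exact_mod_cast one_le_coverN (totallyBounded_of_compactSpace F) hF (half_pos hD)
  refine ⟨coverN F δ₀ * (c ^ 2 * 8 ^ d * δ₀ ^ d), by positivity, ?_⟩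
  filter_upwards [Ioo_mem_nhdsGT (half_pos hD)] with σ hσ
  calc (coverN F σ : ℝ) ≤ coverN F δ₀ * (c ^ 2 * 8 ^ d * (δ₀ / σ) ^ d) :=
        hμ.coverN_le_coverN_mul hc F hσ.1 hσ.2.le (mul_div_cancel₀ _ two_ne_zero).le
    _ = coverN F δ₀ * (c ^ 2 * 8 ^ d * δ₀ ^ d) * σ ^ (-d) := by
        rw [Real.div_rpow (half_pos hD).le hσ.1.le, Real.rpow_neg hσ.1.le]
        ring

lemma exists_rpow_le_coverN_univ [CompactSpace X] [Nonempty X] (hμ : IsAhlforsRegular μ d c)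
    (hc : 0 < c) (hD : 0 < diam (univ : Set X)) :
    ∃ k, 0 < k ∧ ∀ᶠ σ in 𝓝[>] 0, k * σ ^ (-d) ≤ coverN (univ : Set X) σ := by
  refine ⟨c⁻¹ * diam (univ : Set X) ^ d / (c * 2 ^ d), by positivity, ?_⟩
  filter_upwards [Ioo_mem_nhdsGT (half_pos hD)] with σ ⟨hσ0, hσD⟩
  have hmeasure : ENNReal.ofReal (c⁻¹ * diam (univ : Set X) ^ d) ≤
      coverN (univ : Set X) σ * ENNReal.ofReal (c * (2 * σ) ^ d) :=
    (hμ (Classical.arbitrary X) _ hD le_rfl).1.trans ((measure_mono (subset_univ _)).trans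
      (measure_le_coverN_mul μ (totallyBounded_of_compactSpace _) hσ0
        fun _ hE => hμ.measure_le_of_ediam_le hσ0 (by linarith) hE))
  rw [← ENNReal.ofReal_natCast, ← ENNReal.ofReal_mul (Nat.cast_nonneg _),
    ENNReal.ofReal_le_ofReal_iff (by positivity)] at hmeasure
  rw [Real.rpow_neg hσ0.le, ← div_eq_mul_inv, div_div, div_le_iff₀ (by positivity)]
  calc c⁻¹ * diam (univ : Set X) ^ d ≤ coverN (univ : Set X) σ * (c * (2 * σ) ^ d) := hmeasure
    _ = coverN (univ : Set X) σ * (c * 2 ^ d * σ ^ d) := by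
      rw [Real.mul_rpow zero_le_two hσ0.le]
      ring

variable [CompactSpace X] [OpensMeasurableSpace X]

lemma isBoundedUnder_coverExponent (hμ : IsAhlforsRegular μ d c) (hc : 0 < c)
    (hD : 0 < diam (univ : Set X)) {F : Set X} (hF : F.Nonempty) :
    IsBoundedUnder (· ≤ ·) (𝓝[>] 0) (coverExponent F) :=
  have ⟨_, hK, hN⟩ := hμ.exists_coverN_le_rpow hc hD hF
  _root_.isBoundedUnder_coverExponent (totallyBounded_of_compactSpace F) hF hK hN

lemma ubDim_le (hμ : IsAhlforsRegular μ d c) (hc : 0 < c) (hD : 0 < diam (univ : Set X))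
    {F : Set X} (hF : F.Nonempty) : ubDim F ≤ d :=
  have ⟨_, hK, hN⟩ := hμ.exists_coverN_le_rpow hc hD hF
  ubDim_le_of_coverN_le (totallyBounded_of_compactSpace F) hF hK hN

lemma ubDim_univ [Nonempty X] (hμ : IsAhlforsRegular μ d c) (hc : 0 < c)
    (hD : 0 < diam (univ : Set X)) : ubDim (univ : Set X) = d :=
  have ⟨_, hk, hN⟩ := hμ.exists_rpow_le_coverN_univ hc hD
  (hμ.ubDim_le hc hD univ_nonempty).antisymm
    (le_ubDim_of_le_coverN hk hN (hμ.isBoundedUnder_coverExponent hc hD univ_nonempty))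

lemma eventually_coverN_le_coverN_mul (hμ : IsAhlforsRegular μ d c) (hc : 0 < c)
    (hD : 0 < diam (univ : Set X)) (C : Set X) :
    ∀ᶠ δ₀ in 𝓝[>] 0, ∀ σ, 0 < σ → σ ≤ δ₀ →
      (coverN C σ : ℝ) ≤ coverN C δ₀ * (c ^ 2 * 8 ^ d * (δ₀ / σ) ^ d) := by
  filter_upwards [Ioo_mem_nhdsGT (half_pos hD)] with δ₀ hδ₀ σ hσ hσδ₀
  exact hμ.coverN_le_coverN_mul hc C hσ hσδ₀ (by linarith [hδ₀.2])

end IsAhlforsRegular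

end AhlforsRegular

theorem creT_ahlfors_bound_general
    {X : Type*} [MetricSpace X] [CompactSpace X]
    [MeasurableSpace X] [BorelSpace X]
    (dH lam : ℝ) (hlam : 0 < lam)
    (hreg : ∀ (x : X) (ρ : ℝ), 0 < ρ → ρ ≤ Metric.diam (Set.univ : Set X) →
      ENNReal.ofReal (lam⁻¹ * ρ ^ dH) ≤ μH[dH] (Metric.ball x ρ) ∧
      μH[dH] (Metric.ball x ρ) ≤ ENNReal.ofReal (lam * ρ ^ dH))
    (C : Set X)
    (t : ℝ) (ht : t ∈ Set.Ioo (lbDim C) (ubDim C)) :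
    creT C t ≤ (lbDim C / t) *
      ((ubDim (Set.univ : Set X) - t) / (ubDim (Set.univ : Set X) - lbDim C)) := by
  have hμ : IsAhlforsRegular μH[dH] dH lam := hreg
  obtain ⟨hlbt, htub⟩ := ht
  have hCnt : C.Nontrivial := not_subsingleton_iff.1 fun h =>
    (hlbt.trans htub).ne (lbDim_eq_ubDim_of_subsingleton h)
  have : Nonempty X := ⟨hCnt.nonempty.some⟩
  have hD : 0 < diam (univ : Set X) :=
    diam_pos (hCnt.mono (subset_univ C)) isCompact_univ.isBounded
  rw [hμ.ubDim_univ hlam hD]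
  exact creT_le_lbDim_div_mul_of_interpolation (totallyBounded_of_compactSpace C)
    (hμ.isBoundedUnder_coverExponent hlam hD hCnt.nonempty) hlbt
    (htub.le.trans (hμ.ubDim_le hlam hD hCnt.nonempty))
    (hμ.eventually_coverN_le_coverN_mul hlam hD C)

theorem creT_ahlfors_bound
    {X : Type*} [MetricSpace X] [CompactSpace X]
    [MeasurableSpace X] [BorelSpace X]
    (dH lam : ℝ) (hdH : 0 ≤ dH) (hlam : 0 < lam)
    (hdimX : dimH (Set.univ : Set X) = ENNReal.ofReal dH)
    (hreg : ∀ (x : X) (ρ : ℝ), 0 < ρ → ρ ≤ Metric.diam (Set.univ : Set X) →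
      ENNReal.ofReal (lam⁻¹ * ρ ^ dH) ≤ μH[dH] (Metric.ball x ρ) ∧
      μH[dH] (Metric.ball x ρ) ≤ ENNReal.ofReal (lam * ρ ^ dH))
    (C : Set X) (hC : IsCompact C) (hCne : C.Nonempty)
    (t : ℝ) (ht : t ∈ Set.Ioo (lbDim C) (ubDim C)) :
    creT C t ≤ (lbDim C / t) *
      ((ubDim (Set.univ : Set X) - t) / (ubDim (Set.univ : Set X) - lbDim C)) :=
  creT_ahlfors_bound_general dH lam hlam hreg C t ht
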